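/- Let 1 ≤ t < k and n > 2k. If an intersecting family F of k-element subsets of [n] with maximal degree Δ and diversity γ satisfies Δ + (k/(k−t))·γ ≤ (1 − Π_{i=1}^{k} (n−k+1−i)/(n−t−i))·C(n−1,k−1), then δ_t(F) ≤ C(n−t−1, k−t−1) − C(n−t−k−1, k−t−1). -/

import Mathlib

/-! Average the `t`-degrees over the `t`-subsets of `[n] \ {v}`, where `v` has maximal
degree `Δ`. A set through `v` contains `C(k-1,t)` of them and any other set
`C(k,t) = k/(k-t) · C(k-1,t)`, so the total is `C(k-1,t) (Δ + k/(k-t) · γ)`. Since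
`C(n-1,k-1) C(k-1,t) = C(n-1,t) C(n-t-1,k-t-1)` and the product in the hypothesis equals
`C(n-t-k-1,k-t-1) / C(n-t-1,k-t-1)`, the hypothesis says that this total is at most `C(n-1,t)`
times the claimed bound, so one of the `C(n-1,t)` summands is at most that bound. -/

open Finset

def IntersectingFam (F : Finset (Finset ℕ)) : Prop :=
  ∀ A ∈ F, ∀ B ∈ F, (A ∩ B).Nonempty

def CrossIntersecting (𝒜 ℬ : Finset (Finset ℕ)) : Prop :=
  ∀ A ∈ 𝒜, ∀ B ∈ ℬ, (A ∩ B).Nonempty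

/-- The degree of an element `i`: the number of sets of `F` containing `i`. -/
def famDeg (F : Finset (Finset ℕ)) (i : ℕ) : ℕ := (F.filter (fun A => i ∈ A)).card

/-- The maximal degree `Δ(F)` over the ground set `[n]`. -/
def maxDeg (n : ℕ) (F : Finset (Finset ℕ)) : ℕ := (Finset.Icc 1 n).sup (famDeg F)

/-- The diversity `γ(F) = |F| − Δ(F)`. -/
def diversity (n : ℕ) (F : Finset (Finset ℕ)) : ℕ := F.card - maxDeg n F

/-- The degree of a subset `S`: the number of sets of `F` containing `S`. -/
def tDeg (F : Finset (Finset ℕ)) (S : Finset ℕ) : ℕ := (F.filter (fun A => S ⊆ A)).card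

/-- Lexicographic order: `A ⪯ B` iff `A ⊇ B` or `min (A \ B) < min (B \ A)`. -/
def lexLE (A B : Finset ℕ) : Prop := B ⊆ A ∨ (A \ B).min < (B \ A).min

instance : DecidableRel lexLE := fun A B => by unfold lexLE; exact inferInstance

def lexLT (A B : Finset ℕ) : Prop := lexLE A B ∧ A ≠ B

/-- Lex family with characteristic set `X` on ground set `[2,n]`:
`L(X,a) = {A ⊆ [2,n] : |A| = a, A ⪯ X ∩ [2,n]}`. -/
def lexFam (n a : ℕ) (X : Finset ℕ) : Finset (Finset ℕ) :=
  ((Finset.Icc 2 n).powersetCard a).filter (fun A => lexLE A (X ∩ Finset.Icc 2 n))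

/-- Lex family with characteristic set `X` on ground set `[n]`:
`L(X,c) = {A ⊆ [n] : |A| = c, A ⪯ X}`. -/
def lexFam1 (n c : ℕ) (X : Finset ℕ) : Finset (Finset ℕ) :=
  ((Finset.Icc 1 n).powersetCard c).filter (fun A => lexLE A X)

/-- Resistant pairs for uniformity `k` on ground set `[n]`. -/
def ResistantPair (n k : ℕ) (S T : Finset ℕ) : Prop :=
  (S = ({1, 4} : Finset ℕ) ∧ T = ({2, 3, 4} : Finset ℕ)) ∨
  (1 ∈ S ∧ S ⊆ Finset.Icc 1 n ∧ T ⊆ Finset.Icc 2 n ∧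
    ∃ j : ℕ, T.max = (j : WithTop ℕ) ∧ S ∩ T = {j} ∧ S ∪ T = Finset.Icc 1 j ∧
      S.card ≤ k ∧ T.card ≤ k ∧
      ∀ i : ℕ, 4 ≤ i → i ≤ j → (Finset.Icc 1 i ∩ S).card < (Finset.Icc 1 i \ S).card)

/-- `(a,b)`-resistant pairs on ground set `[n]`. -/
def ABResistantPair (n a b : ℕ) (S T : Finset ℕ) : Prop :=
  (T = Finset.Icc 1 (b - a + 2) ∧ S = ({1, b - a + 2} : Finset ℕ)) ∨
  (S ⊆ Finset.Icc 1 n ∧ T ⊆ Finset.Icc 1 n ∧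
    ∃ j : ℕ, T.max = (j : WithTop ℕ) ∧ S ∩ T = {j} ∧ S ∪ T = Finset.Icc 1 j ∧
      S.card ≤ a ∧ T.card ≤ b ∧
      ∀ i : ℕ, b - a + 2 ≤ i → i ≤ j →
        ((Finset.Icc 1 i ∩ S).card : ℤ) - (a : ℤ) < ((Finset.Icc 1 i \ S).card : ℤ) - (b : ℤ))

/-- Resistant numbers: `γ` is resistant if in its `(n−k−1)`-cascade form
`γ = Σ_{i=1}^s C(n−b_i, n−k−i)` (with `1 ≤ b_1 < … < b_s`) one has `|S_γ| ≤ k`,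
`s ≤ k−1` and `b_i > 2i+2` for each `i`; in addition `C(n−4,k−3)` is resistant. -/
def IsResistantNum (n k γ : ℕ) : Prop :=
  γ = Nat.choose (n - 4) (k - 3) ∨
  ∃ (s : ℕ) (b : ℕ → ℕ), 1 ≤ s ∧ 1 ≤ b 1 ∧
    (∀ i j, 1 ≤ i → i < j → j ≤ s → b i < b j) ∧
    γ = ∑ i ∈ Finset.Icc 1 s, Nat.choose (n - b i) (n - k - i) ∧
    s ≤ k - 1 ∧
    (insert (b s) (Finset.Icc 2 (b s) \ (Finset.Icc 1 s).image b)).card ≤ k ∧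
    (∀ i, 1 ≤ i → i ≤ s → b i > 2 * i + 2)

/-- The family `J_i`. -/
def Jfam (n k i : ℕ) : Finset (Finset ℕ) :=
  {Finset.Icc 2 (k+1), Finset.Icc (i+1) (k+i)} ∪
    ((Finset.Icc 1 n).powersetCard k).filter
      (fun F => 1 ∈ F ∧ (F ∩ Finset.Icc 2 (k+1)).Nonempty ∧ (F ∩ Finset.Icc (i+1) (k+i)).Nonempty)

/-- Two families are isomorphic if one is obtained from the other by a permutation
of the ground set `[n]`. -/
def IsomorphicFam (n : ℕ) (F G : Finset (Finset ℕ)) : Prop :=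
  ∃ σ : Equiv.Perm ℕ, (Finset.Icc 1 n).image σ = Finset.Icc 1 n ∧
    F.image (fun A => A.image σ) = G

/-- `F` is isomorphic to a subfamily of `G`. -/
def IsoSubfamily (n : ℕ) (F G : Finset (Finset ℕ)) : Prop :=
  ∃ σ : Equiv.Perm ℕ, (Finset.Icc 1 n).image σ = Finset.Icc 1 n ∧
    F.image (fun A => A.image σ) ⊆ G

/-- `L` is an initial segment of the lex order on `k`-subsets of `[2,n]`. -/
def IsInitialSeg (n k : ℕ) (L : Finset (Finset ℕ)) : Prop :=
  L ⊆ (Finset.Icc 2 n).powersetCard k ∧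
  ∀ A ∈ L, ∀ B ∈ (Finset.Icc 2 n).powersetCard k, lexLE B A → B ∈ L

/-- The maximal intersecting family `F_l` whose sets avoiding `1` are exactly `L`. -/
def maxFam (n k : ℕ) (L : Finset (Finset ℕ)) : Finset (Finset ℕ) :=
  L ∪ ((Finset.Icc 1 n).powersetCard k).filter
    (fun A => 1 ∈ A ∧ ∀ B ∈ L, (A ∩ B).Nonempty)

/-- The sets `T` allowed in the recursive definition of a `T_l`-neutral pair:
`T_l` is allowed, and whenever `T'` is allowed so is `T' ∪ {2|T'|}`. -/
inductive NeutralSet (T0 : Finset ℕ) : Finset ℕ → Prop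
  | base : NeutralSet T0 T0
  | step (T' : Finset ℕ) : NeutralSet T0 T' → NeutralSet T0 (insert (2 * T'.card) T')

/-- The family `A_0(n,k,s)`. -/
def A0fam (n k s : ℕ) : Finset (Finset ℕ) :=
  ((Finset.Icc 1 n).powersetCard k).filter (fun A => (A ∩ Finset.Icc 1 s).Nonempty)

theorem sum_tDeg_powersetCard (F : Finset (Finset ℕ)) (W : Finset ℕ) (t : ℕ) :
    ∑ S ∈ W.powersetCard t, tDeg F S = ∑ A ∈ F, (A ∩ W).card.choose t := by
  simp only [tDeg, card_filter]
  rw [sum_comm]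
  refine sum_congr rfl fun A _ => ?_
  rw [← card_filter, ← card_powersetCard]
  congr 1
  ext S
  simp only [mem_filter, mem_powersetCard, subset_inter_iff]
  tauto

theorem sum_tDeg_powersetCard_erase {U : Finset ℕ} {k : ℕ} {F : Finset (Finset ℕ)}
    (hF : F ⊆ U.powersetCard k) (v t : ℕ) :
    ∑ S ∈ (U.erase v).powersetCard t, tDeg F S =
      famDeg F v * (k - 1).choose t + (F.card - famDeg F v) * k.choose t := by
  have hcard : ∀ A ∈ F, (A ∩ U.erase v).card.choose t =
      if v ∈ A then (k - 1).choose t else k.choose t := by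
    intro A hA
    obtain ⟨hAU, hAk⟩ := mem_powersetCard.mp (hF hA)
    rw [inter_erase, inter_eq_left.mpr hAU]
    split_ifs with hv
    · rw [card_erase_of_mem hv, hAk]
    · rw [erase_eq_of_notMem hv, hAk]
  have hcompl : (F.filter (v ∉ ·)).card = F.card - famDeg F v := by
    have := card_filter_add_card_filter_not (s := F) (v ∈ ·)
    rw [famDeg]
    omega
  rw [sum_tDeg_powersetCard, sum_congr rfl hcard, sum_ite, sum_const, sum_const, hcompl,
    smul_eq_mul, smul_eq_mul, famDeg]

theorem exists_famDeg_eq_maxDeg {n : ℕ} (hn : 1 ≤ n) (F : Finset (Finset ℕ)) :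
    ∃ v ∈ Icc 1 n, famDeg F v = maxDeg n F :=
  (exists_mem_eq_sup _ ⟨1, mem_Icc.mpr ⟨le_rfl, hn⟩⟩ _).imp
    fun _ ⟨hv, h⟩ => ⟨hv, h.symm⟩

theorem prod_Icc_natCast_add_one_sub {R : Type*} [CommRing R] (x k : ℕ) :
    ∏ i ∈ Icc 1 k, ((x : R) + 1 - i) = x.descFactorial k := by
  rw [← descPochhammer_eval_eq_descFactorial, descPochhammer_eval_eq_prod_range,
    ← Ico_add_one_right_eq_Icc, prod_Ico_eq_prod_range, Nat.add_sub_cancel]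
  refine prod_congr rfl fun i _ => ?_
  push_cast
  ring

theorem choose_mul_descFactorial_sub (m j k : ℕ) :
    m.choose j * (m - j).descFactorial k = (m - k).choose j * m.descFactorial k := by
  have hj := Nat.choose_mul (n := m) (k := j + k) (s := j) (Nat.le_add_right j k)
  have hk := Nat.choose_mul (n := m) (k := j + k) (s := k) (Nat.le_add_left k j)
  rw [Nat.add_sub_cancel_left, Nat.choose_symm_add] at hj
  rw [Nat.add_sub_cancel] at hk
  rw [Nat.descFactorial_eq_factorial_mul_choose, Nat.descFactorial_eq_factorial_mul_choose]
  calc m.choose j * (k.factorial * (m - j).choose k)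
      = k.factorial * (m.choose j * (m - j).choose k) := by ring
    _ = k.factorial * (m.choose k * (m - k).choose j) := by rw [← hj, hk]
    _ = (m - k).choose j * (k.factorial * m.choose k) := by ring

theorem prod_mul_choose_eq_choose {n k t : ℕ} (htk : t < k) (hn : t + k < n) :
    (∏ i ∈ Icc 1 k, ((n : ℚ) - k + 1 - i) / ((n : ℚ) - t - i)) *
        (n - t - 1).choose (k - t - 1) = (n - t - k - 1).choose (k - t - 1) := by
  have hnum : ∀ i ∈ Icc 1 k, (n : ℚ) - k + 1 - i = ((n - k : ℕ) : ℚ) + 1 - i := by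
    intro i _
    rw [Nat.cast_sub (by omega)]
  have hden : ∀ i ∈ Icc 1 k, (n : ℚ) - t - i = ((n - t - 1 : ℕ) : ℚ) + 1 - i := by
    intro i _
    rw [Nat.cast_sub (by omega), Nat.cast_sub (by omega)]
    ring
  have key := choose_mul_descFactorial_sub (n - t - 1) (k - t - 1) k
  rw [show n - t - 1 - (k - t - 1) = n - k by omega, show n - t - 1 - k = n - t - k - 1 by omega]
    at key
  have hpos : ((n - t - 1).descFactorial k : ℚ) ≠ 0 := by
    exact_mod_cast (Nat.descFactorial_pos.mpr (by omega)).ne'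
  rw [prod_div_distrib, prod_congr rfl hnum, prod_congr rfl hden, prod_Icc_natCast_add_one_sub,
    prod_Icc_natCast_add_one_sub, div_mul_eq_mul_div, div_eq_iff hpos]
  exact_mod_cast (mul_comm _ _).trans key

theorem choose_eq_div_mul_choose_pred {k t : ℕ} (htk : t < k) :
    (k.choose t : ℚ) = k / (k - t) * (k - 1).choose t := by
  have h := Nat.choose_mul_succ_eq (k - 1) t
  rw [Nat.sub_add_cancel (by omega)] at h
  have hkt : (k : ℚ) - t ≠ 0 := sub_ne_zero.mpr (by exact_mod_cast htk.ne')
  rw [div_mul_eq_mul_div, eq_div_iff hkt]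
  have h' : ((k - 1).choose t : ℚ) * k = k.choose t * ((k - t : ℕ) : ℚ) := by exact_mod_cast h
  rw [Nat.cast_sub htk.le] at h'
  linarith

theorem mul_choose_pred_add_mul_choose_le {n k t D γ : ℕ} (htk : t < k) (hn : t + k < n)
    (hcond : (D : ℚ) + (k : ℚ) / ((k : ℚ) - (t : ℚ)) * (γ : ℚ) ≤
      (1 - ∏ i ∈ Icc 1 k,
          ((n : ℚ) - (k : ℚ) + 1 - (i : ℚ)) / ((n : ℚ) - (t : ℚ) - (i : ℚ))) *
        ((n - 1).choose (k - 1) : ℚ)) :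
    D * (k - 1).choose t + γ * k.choose t ≤
      (n - 1).choose t * ((n - t - 1).choose (k - t - 1) - (n - t - k - 1).choose (k - t - 1)) := by
  have hmul : (n - 1).choose (k - 1) * (k - 1).choose t =
      (n - 1).choose t * (n - t - 1).choose (k - t - 1) := by
    rw [Nat.choose_mul (by omega), show n - 1 - t = n - t - 1 by omega,
      show k - 1 - t = k - t - 1 by omega]
  have hle : (n - t - k - 1).choose (k - t - 1) ≤ (n - t - 1).choose (k - t - 1) :=
    Nat.choose_le_choose _ (by omega)
  have hmulq : ((n - 1).choose (k - 1) : ℚ) * (k - 1).choose t =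
      (n - 1).choose t * (n - t - 1).choose (k - t - 1) := by exact_mod_cast hmul
  rw [← Nat.cast_le (α := ℚ)]
  push_cast [Nat.cast_sub hle]
  calc (D : ℚ) * (k - 1).choose t + γ * k.choose t
      = (D + k / (k - t) * γ) * (k - 1).choose t := by
        rw [choose_eq_div_mul_choose_pred htk]
        ring
    _ ≤ (1 - ∏ i ∈ Icc 1 k, ((n : ℚ) - k + 1 - i) / ((n : ℚ) - t - i)) *
          (n - 1).choose (k - 1) * (k - 1).choose t :=
        mul_le_mul_of_nonneg_right hcond (Nat.cast_nonneg _)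
    _ = (n - 1).choose t *
          ((n - t - 1).choose (k - t - 1) - (n - t - k - 1).choose (k - t - 1)) := by
        rw [← prod_mul_choose_eq_choose htk hn, mul_assoc, hmulq]
        ring

theorem statement18_general (n k t : ℕ) (htk : t < k) (hn : 2 * k < n)
    (F : Finset (Finset ℕ)) (hF : F ⊆ (Finset.Icc 1 n).powersetCard k)
    (hcond : (maxDeg n F : ℚ) +
        (k : ℚ) / ((k : ℚ) - (t : ℚ)) * (diversity n F : ℚ) ≤
      (1 - ∏ i ∈ Finset.Icc 1 k,
          ((n : ℚ) - (k : ℚ) + 1 - (i : ℚ)) / ((n : ℚ) - (t : ℚ) - (i : ℚ))) *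
        (Nat.choose (n - 1) (k - 1) : ℚ)) :
    ∃ S ∈ (Finset.Icc 1 n).powersetCard t,
      tDeg F S ≤ Nat.choose (n - t - 1) (k - t - 1) -
        Nat.choose (n - t - k - 1) (k - t - 1) := by
  obtain ⟨v, hv, hvmax⟩ := exists_famDeg_eq_maxDeg (by omega : 1 ≤ n) F
  rw [diversity, ← hvmax] at hcond
  have hWcard : ((Icc 1 n).erase v).card = n - 1 := by
    rw [card_erase_of_mem hv, Nat.card_Icc, Nat.add_sub_cancel]
  have hsum : ∑ S ∈ ((Icc 1 n).erase v).powersetCard t, tDeg F S ≤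
      ∑ _S ∈ ((Icc 1 n).erase v).powersetCard t,
        ((n - t - 1).choose (k - t - 1) - (n - t - k - 1).choose (k - t - 1)) := by
    rw [sum_tDeg_powersetCard_erase hF, sum_const, card_powersetCard, hWcard, smul_eq_mul]
    exact mul_choose_pred_add_mul_choose_le htk (by omega) hcond
  obtain ⟨S, hS, hSdeg⟩ := exists_le_of_sum_le
    (powersetCard_nonempty.mpr (by omega)) hsum
  exact ⟨S, powersetCard_mono (erase_subset _ _) hS, hSdeg⟩

/-- the Hilton–Milner analogue of Proposition `stat1`. -/
theorem statement18 (n k t : ℕ) (ht : 1 ≤ t) (htk : t < k) (hn : 2 * k < n)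
    (F : Finset (Finset ℕ)) (hF : F ⊆ (Finset.Icc 1 n).powersetCard k)
    (hint : IntersectingFam F)
    (hcond : (maxDeg n F : ℚ) +
        (k : ℚ) / ((k : ℚ) - (t : ℚ)) * (diversity n F : ℚ) ≤
      (1 - ∏ i ∈ Finset.Icc 1 k,
          ((n : ℚ) - (k : ℚ) + 1 - (i : ℚ)) / ((n : ℚ) - (t : ℚ) - (i : ℚ))) *
        (Nat.choose (n - 1) (k - 1) : ℚ)) :
    ∃ S ∈ (Finset.Icc 1 n).powersetCard t,
      tDeg F S ≤ Nat.choose (n - t - 1) (k - t - 1) -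
        Nat.choose (n - t - k - 1) (k - t - 1) :=
  statement18_general n k t htk hn F hF hcond
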